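/- Let (Ω, F, μ) be a probability space and Θ ⊂ ℝ^p a compact set. For each θ ∈ Θ let φ_θ : Ω → ℝ be measurable and nonnegative, and suppose: (A1) there exists F ∈ L¹(μ) with sup_{θ∈Θ} φ_θ(x) ≤ F(x) for μ-a.e. x; (A2) there exists L ∈ L¹(μ) with |φ_θ(x) − φ_{θ'}(x)| ≤ L(x) ‖θ − θ'‖ for μ-a.e. x and all θ, θ' ∈ Θ. Let ξ₁, ξ₂, … be i.i.d. with law μ and set Ĵ_N(θ) = (1/N) Σ_{p=1}^N φ_θ(ξ_p) and J(θ) = ∫_Ω φ_θ dμ. Then the uniform law of large numbers holds: sup_{θ∈Θ} |Ĵ_N(θ) − J(θ)| → 0 almost surely as N → ∞. -/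

import Mathlib

open MeasureTheory Filter ProbabilityTheory Finset

/-- Strong law of large numbers transported through a sequence of i.i.d. variables. -/
theorem slln_aux {Ω : Type*} [MeasurableSpace Ω] (μ : Measure Ω)
    {Ω' : Type*} [MeasurableSpace Ω'] (P : Measure Ω') [IsProbabilityMeasure P]
    (ξ : ℕ → Ω' → Ω) (hξmeas : ∀ i, Measurable (ξ i))
    (hξindep : ProbabilityTheory.iIndepFun ξ P)
    (hξlaw : ∀ i, P.map (ξ i) = μ)
    (g : Ω → ℝ) (hgmeas : Measurable g) (hgint : Integrable g μ) :
    ∀ᵐ ω ∂P, Tendsto (fun N : ℕ => (N : ℝ)⁻¹ * ∑ q ∈ Finset.range N, g (ξ q ω))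
      atTop (nhds (∫ x, g x ∂μ)) := by
  have hid : ∀ i, IdentDistrib (fun ω => g (ξ i ω)) (fun ω => g (ξ 0 ω)) P P := by
    intro i
    have h0 : IdentDistrib (ξ i) (ξ 0) P P :=
      ⟨(hξmeas i).aemeasurable, (hξmeas 0).aemeasurable, by rw [hξlaw i, hξlaw 0]⟩
    exact h0.comp hgmeas
  have hint : Integrable (fun ω => g (ξ 0 ω)) P := by
    rw [← hξlaw 0] at hgint
    exact hgint.comp_measurable (hξmeas 0)
  have hindep : Pairwise (Function.onFun (IndepFun · · P) fun i ω => g (ξ i ω)) := by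
    intro i j hij
    exact (hξindep.indepFun hij).comp hgmeas hgmeas
  have h := strong_law_ae_real (μ := P) (fun i ω => g (ξ i ω)) hint hindep hid
  have hI : ∫ ω, g (ξ 0 ω) ∂P = ∫ x, g x ∂μ := by
    rw [← hξlaw 0, integral_map (hξmeas 0).aemeasurable hgmeas.aestronglyMeasurable]
  rw [hI] at h
  filter_upwards [h] with ω hω
  convert hω using 2 with N
  rw [div_eq_inv_mul]

/-- **uniform law of large numbers.** Let `(Ω, F, μ)` be a probability space
and `Θ ⊂ ℝ^p` compact.  For `θ ∈ Θ` let `φ_θ : Ω → ℝ` be measurable and nonnegative with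
(A1) an integrable envelope `F` and (A2) an integrable Lipschitz bound `L` in `θ`.
If `ξ₁, ξ₂, …` are i.i.d. with law `μ`, `Ĵ_N(θ) = (1/N) Σ_{p<N} φ_θ(ξ_p)` and
`J(θ) = ∫ φ_θ dμ`, then `sup_{θ∈Θ} |Ĵ_N(θ) − J(θ)| → 0` almost surely. -/
theorem stmt6 {Ω : Type*} [MeasurableSpace Ω] (μ : Measure Ω) [IsProbabilityMeasure μ]
    {p : ℕ} (Θ : Set (EuclideanSpace ℝ (Fin p))) (hΘcomp : IsCompact Θ)
    (φ : EuclideanSpace ℝ (Fin p) → Ω → ℝ)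
    (hφmeas : ∀ θ ∈ Θ, Measurable (φ θ))
    (hφnonneg : ∀ θ ∈ Θ, ∀ x, 0 ≤ φ θ x)
    (F : Ω → ℝ) (hFint : Integrable F μ)
    (hEnv : ∀ᵐ x ∂μ, ∀ θ ∈ Θ, φ θ x ≤ F x)
    (L : Ω → ℝ) (hLint : Integrable L μ)
    (hLip : ∀ᵐ x ∂μ, ∀ θ ∈ Θ, ∀ θ' ∈ Θ, |φ θ x - φ θ' x| ≤ L x * ‖θ - θ'‖)
    {Ω' : Type*} [MeasurableSpace Ω'] (P : Measure Ω') [IsProbabilityMeasure P]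
    (ξ : ℕ → Ω' → Ω) (hξmeas : ∀ i, Measurable (ξ i))
    (hξindep : ProbabilityTheory.iIndepFun ξ P)
    (hξlaw : ∀ i, P.map (ξ i) = μ) :
    ∀ᵐ ω ∂P, Filter.Tendsto
      (fun N : ℕ => ⨆ θ : Θ,
        |(N : ℝ)⁻¹ * ∑ q ∈ Finset.range N, φ θ (ξ q ω) - ∫ x, φ θ x ∂μ|)
      Filter.atTop (nhds 0) := by
  classical
  rcases Θ.eq_empty_or_nonempty with hΘe | hΘne
  · refine Filter.Eventually.of_forall fun ω => ?_
    haveI : IsEmpty Θ := by rw [hΘe]; infer_instance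
    simpa [Real.iSup_of_isEmpty] using (tendsto_const_nhds : Tendsto (fun _ : ℕ => (0:ℝ)) atTop (nhds 0))
  obtain ⟨θ₀, hθ₀⟩ := hΘne
  haveI : Nonempty Θ := ⟨⟨θ₀, hθ₀⟩⟩
  -- a measurable nonnegative Lipschitz bound
  set Lm : Ω → ℝ := fun x => |hLint.1.mk L x| with hLmdef
  have hLmmeas : Measurable Lm := hLint.1.stronglyMeasurable_mk.measurable.abs
  have hLmint : Integrable Lm μ := (hLint.congr hLint.1.ae_eq_mk).abs
  have hLmnonneg : ∀ x, 0 ≤ Lm x := fun x => abs_nonneg _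
  have hLipm : ∀ᵐ x ∂μ, ∀ θ ∈ Θ, ∀ θ' ∈ Θ, |φ θ x - φ θ' x| ≤ Lm x * ‖θ - θ'‖ := by
    filter_upwards [hLip, hLint.1.ae_eq_mk] with x hx hmk θ hθ θ' hθ'
    calc |φ θ x - φ θ' x| ≤ L x * ‖θ - θ'‖ := hx θ hθ θ' hθ'
      _ ≤ |L x| * ‖θ - θ'‖ := mul_le_mul_of_nonneg_right (le_abs_self _) (norm_nonneg _)
      _ = Lm x * ‖θ - θ'‖ := by rw [hmk]
  -- integrability of each φ θ
  have hφint : ∀ θ ∈ Θ, Integrable (φ θ) μ := by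
    intro θ hθ
    refine hFint.mono (hφmeas θ hθ).aestronglyMeasurable ?_
    filter_upwards [hEnv] with x hx
    rw [Real.norm_eq_abs, Real.norm_eq_abs, abs_of_nonneg (hφnonneg θ hθ x)]
    exact (hx θ hθ).trans (le_abs_self _)
  -- finite (1/(n+1))-nets of Θ inside Θ
  have hcov : ∀ n : ℕ, ∃ T : Finset (EuclideanSpace ℝ (Fin p)), ↑T ⊆ Θ ∧
      ∀ x ∈ Θ, ∃ t ∈ T, dist x t < 1/(n+1 : ℝ) := by
    intro n
    have htb := hΘcomp.totallyBounded
    rw [totallyBounded_iff_subset] at htb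
    obtain ⟨t, hts, htfin, hc⟩ := htb {q | dist q.1 q.2 < 1/(n+1 : ℝ)}
      (Metric.dist_mem_uniformity (by positivity))
    refine ⟨htfin.toFinset, by simpa using hts, fun x hx => ?_⟩
    obtain ⟨y, hy, hxy⟩ := Set.mem_iUnion₂.1 (hc hx)
    exact ⟨y, by simpa using hy, hxy⟩
  choose T hTsub hTcov using hcov
  -- almost sure events
  have hA : ∀ᵐ ω ∂P, ∀ n : ℕ, ∀ t ∈ (T n : Set (EuclideanSpace ℝ (Fin p))),
      Tendsto (fun N : ℕ => (N:ℝ)⁻¹ * ∑ q ∈ Finset.range N, φ t (ξ q ω)) atTop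
        (nhds (∫ x, φ t x ∂μ)) := by
    rw [ae_all_iff]
    intro n
    rw [ae_ball_iff (T n).countable_toSet]
    intro t ht
    have htΘ : t ∈ Θ := hTsub n ht
    exact slln_aux μ P ξ hξmeas hξindep hξlaw (φ t) (hφmeas t htΘ) (hφint t htΘ)
  have hB : ∀ᵐ ω ∂P, Tendsto (fun N : ℕ => (N:ℝ)⁻¹ * ∑ q ∈ Finset.range N, Lm (ξ q ω))
      atTop (nhds (∫ x, Lm x ∂μ)) :=
    slln_aux μ P ξ hξmeas hξindep hξlaw Lm hLmmeas hLmint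
  have hC : ∀ᵐ ω ∂P, ∀ q : ℕ, ∀ θ ∈ Θ, ∀ θ' ∈ Θ,
      |φ θ (ξ q ω) - φ θ' (ξ q ω)| ≤ Lm (ξ q ω) * ‖θ - θ'‖ := by
    rw [ae_all_iff]
    intro q
    exact ae_of_ae_map (hξmeas q).aemeasurable (by rw [hξlaw q]; exact hLipm)
  set ILm := ∫ x, Lm x ∂μ with hILmdef
  have hILm0 : 0 ≤ ILm := integral_nonneg hLmnonneg
  filter_upwards [hA, hB, hC] with ω hAω hBω hCω
  rw [Metric.tendsto_atTop]
  intro ε hε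
  obtain ⟨n, hn⟩ := exists_nat_one_div_lt (show (0:ℝ) < ε/2/(2*ILm+1) by positivity)
  set δ : ℝ := 1/(n+1 : ℝ) with hδdef
  have hδpos : 0 < δ := by positivity
  have hδsmall : (2*ILm+1)*δ < ε/2 := by
    have h := (div_lt_div_iff₀ (by positivity) (by positivity)).1
      (show δ / 1 < (ε/2) / (2*ILm+1) by simpa using hn)
    nlinarith
  -- sum of center errors tends to 0
  have hS : Tendsto (fun N : ℕ => ∑ t ∈ T n,
      |(N:ℝ)⁻¹ * ∑ q ∈ Finset.range N, φ t (ξ q ω) - ∫ x, φ t x ∂μ|) atTop (nhds 0) := by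
    rw [show (0:ℝ) = ∑ t ∈ T n, 0 by simp]
    refine tendsto_finset_sum _ fun t ht => ?_
    simpa using ((hAω n t ht).sub_const (∫ x, φ t x ∂μ)).abs
  have hE1 : ∀ᶠ N : ℕ in atTop, ∑ t ∈ T n,
      |(N:ℝ)⁻¹ * ∑ q ∈ Finset.range N, φ t (ξ q ω) - ∫ x, φ t x ∂μ| < ε/2 :=
    hS.eventually (gt_mem_nhds (by positivity))
  have hE2 : ∀ᶠ N : ℕ in atTop,
      (N:ℝ)⁻¹ * ∑ q ∈ Finset.range N, Lm (ξ q ω) < ILm + 1 :=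
    hBω.eventually (gt_mem_nhds (by linarith))
  have key : ∀ᶠ N : ℕ in atTop, dist (⨆ θ : Θ,
      |(N : ℝ)⁻¹ * ∑ q ∈ Finset.range N, φ θ (ξ q ω) - ∫ x, φ θ x ∂μ|) 0 < ε := by
    filter_upwards [hE1, hE2] with N h1 h2
    set SN : ℝ := (N:ℝ)⁻¹ * ∑ q ∈ Finset.range N, Lm (ξ q ω) with hSNdef
    have hSN0 : 0 ≤ SN :=
      mul_nonneg (by positivity) (Finset.sum_nonneg fun q _ => hLmnonneg _)
    set S : ℝ := ∑ t ∈ T n,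
      |(N:ℝ)⁻¹ * ∑ q ∈ Finset.range N, φ t (ξ q ω) - ∫ x, φ t x ∂μ| with hSdef
    have hS0 : 0 ≤ S := Finset.sum_nonneg fun t _ => abs_nonneg _
    set A : ℝ := SN * δ + S + ILm * δ with hAdef
    have hbound : ∀ θ : Θ,
        |(N : ℝ)⁻¹ * ∑ q ∈ Finset.range N, φ θ (ξ q ω) - ∫ x, φ ↑θ x ∂μ| ≤ A := by
      rintro ⟨θ, hθ⟩
      obtain ⟨t, htT, hθt⟩ := hTcov n θ hθ
      have htΘ : t ∈ Θ := hTsub n htT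
      have hnorm : ‖θ - t‖ ≤ δ := le_of_lt (by rwa [← dist_eq_norm])
      -- empirical Lipschitz estimate
      have h1' : |(N:ℝ)⁻¹ * ∑ q ∈ Finset.range N, φ θ (ξ q ω)
          - (N:ℝ)⁻¹ * ∑ q ∈ Finset.range N, φ t (ξ q ω)| ≤ SN * δ := by
        rw [← mul_sub, ← Finset.sum_sub_distrib, abs_mul, abs_inv, Nat.abs_cast]
        calc (N:ℝ)⁻¹ * |∑ q ∈ Finset.range N, (φ θ (ξ q ω) - φ t (ξ q ω))|
            ≤ (N:ℝ)⁻¹ * ∑ q ∈ Finset.range N, |φ θ (ξ q ω) - φ t (ξ q ω)| := by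
              gcongr
              exact Finset.abs_sum_le_sum_abs _ _
          _ ≤ (N:ℝ)⁻¹ * ∑ q ∈ Finset.range N, Lm (ξ q ω) * δ := by
              gcongr with q hq
              exact (hCω q θ hθ t htΘ).trans
                  (mul_le_mul_of_nonneg_left hnorm (hLmnonneg _))
          _ = SN * δ := by rw [← Finset.sum_mul, hSNdef]; ring
      -- integral Lipschitz estimate
      have h3' : |∫ x, φ t x ∂μ - ∫ x, φ θ x ∂μ| ≤ ILm * δ := by
        rw [← integral_sub (hφint t htΘ) (hφint θ hθ)]
        calc |∫ x, (φ t x - φ θ x) ∂μ| ≤ ∫ x, |φ t x - φ θ x| ∂μ := by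
              simpa [Real.norm_eq_abs] using
                norm_integral_le_integral_norm (fun x => φ t x - φ θ x) (μ := μ)
          _ ≤ ∫ x, Lm x * δ ∂μ := by
              refine integral_mono_ae ((hφint t htΘ).sub (hφint θ hθ)).abs
                (hLmint.mul_const δ) ?_
              filter_upwards [hLipm] with x hx
              exact (hx t htΘ θ hθ).trans
                (mul_le_mul_of_nonneg_left (by rwa [norm_sub_rev]) (hLmnonneg _))
          _ = ILm * δ := by rw [integral_mul_const]
      -- center error estimate
      have h2' : |(N:ℝ)⁻¹ * ∑ q ∈ Finset.range N, φ t (ξ q ω) - ∫ x, φ t x ∂μ| ≤ S :=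
        Finset.single_le_sum
          (f := fun t' => |(N:ℝ)⁻¹ * ∑ q ∈ Finset.range N, φ t' (ξ q ω) - ∫ x, φ t' x ∂μ|)
          (fun t' _ => abs_nonneg _) htT
      calc |(N : ℝ)⁻¹ * ∑ q ∈ Finset.range N, φ θ (ξ q ω) - ∫ x, φ θ x ∂μ|
          ≤ |(N:ℝ)⁻¹ * ∑ q ∈ Finset.range N, φ θ (ξ q ω)
              - (N:ℝ)⁻¹ * ∑ q ∈ Finset.range N, φ t (ξ q ω)|
            + |(N:ℝ)⁻¹ * ∑ q ∈ Finset.range N, φ t (ξ q ω) - ∫ x, φ θ x ∂μ| :=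
            abs_sub_le _ _ _
        _ ≤ |(N:ℝ)⁻¹ * ∑ q ∈ Finset.range N, φ θ (ξ q ω)
              - (N:ℝ)⁻¹ * ∑ q ∈ Finset.range N, φ t (ξ q ω)|
            + (|(N:ℝ)⁻¹ * ∑ q ∈ Finset.range N, φ t (ξ q ω) - ∫ x, φ t x ∂μ|
              + |∫ x, φ t x ∂μ - ∫ x, φ θ x ∂μ|) := by
            gcongr
            exact abs_sub_le _ _ _
        _ ≤ SN * δ + (S + ILm * δ) := by gcongr
        _ = A := by rw [hAdef]; ring
    have hA_lt : A < ε := by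
      have hmul : SN * δ ≤ (ILm + 1) * δ := mul_le_mul_of_nonneg_right h2.le hδpos.le
      have hexp : (ILm + 1) * δ + ILm * δ = (2*ILm+1) * δ := by ring
      rw [hAdef]
      linarith
    have hbdd : BddAbove (Set.range fun θ : Θ =>
        |(N : ℝ)⁻¹ * ∑ q ∈ Finset.range N, φ θ (ξ q ω) - ∫ x, φ ↑θ x ∂μ|) :=
      ⟨A, by rintro x ⟨θ, rfl⟩; exact hbound θ⟩
    have hsup_le : (⨆ θ : Θ,
        |(N : ℝ)⁻¹ * ∑ q ∈ Finset.range N, φ θ (ξ q ω) - ∫ x, φ ↑θ x ∂μ|) ≤ A :=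
      ciSup_le hbound
    have hsup_ge : 0 ≤ ⨆ θ : Θ,
        |(N : ℝ)⁻¹ * ∑ q ∈ Finset.range N, φ θ (ξ q ω) - ∫ x, φ ↑θ x ∂μ| :=
      le_ciSup_of_le hbdd ⟨θ₀, hθ₀⟩ (abs_nonneg _)
    rw [Real.dist_eq, sub_zero, abs_of_nonneg hsup_ge]
    exact lt_of_le_of_lt hsup_le hA_lt
  exact Filter.eventually_atTop.1 key
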